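/- Let φ be a C² solution of φ_tt - e^{-φ}φ_xx = -φ_t², and define p = φ_t + e^{-φ/2}φ_x, q = φ_t - e^{-φ/2}φ_x, λ = e^{-φ/2}. Then q satisfies q_t + λ q_x = -(1/4)(q² + 3pq). -/

import Mathlib

noncomputable def partialT (f : ℝ → ℝ → ℝ) (t x : ℝ) : ℝ :=
  deriv (fun s => f s x) t

noncomputable def partialX (f : ℝ → ℝ → ℝ) (t x : ℝ) : ℝ :=
  deriv (fun y => f t y) x

/-! Along the characteristic field `∂_t + λ ∂_x`, the derivative of `q = φ_t - λ φ_x` contains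
`φ_tt - λ² φ_xx`, which the equation turns into `-φ_t²` because `λ² = e^{-φ}`; the mixed terms
`λ (φ_xt - φ_tx)` cancel by the symmetry of second derivatives, and what is left comes from
`∂ λ = -λ ∂φ / 2`. -/

open Function

section PartialDerivatives

variable {f : ℝ → ℝ → ℝ} {t x : ℝ}

lemma hasDerivAt_partialT (hf : DifferentiableAt ℝ (uncurry f) (t, x)) :
    HasDerivAt (fun s => f s x) (partialT f t x) t :=
  DifferentiableAt.hasDerivAt (f := uncurry f ∘ fun s => (s, x))
    (hf.comp t (differentiableAt_id.prodMk (differentiableAt_const x)))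

lemma hasDerivAt_partialX (hf : DifferentiableAt ℝ (uncurry f) (t, x)) :
    HasDerivAt (fun y => f t y) (partialX f t x) x :=
  DifferentiableAt.hasDerivAt (f := uncurry f ∘ fun y => (t, y))
    (hf.comp x ((differentiableAt_const t).prodMk differentiableAt_id))

lemma partialT_eq_fderiv (hf : DifferentiableAt ℝ (uncurry f) (t, x)) :
    partialT f t x = fderiv ℝ (uncurry f) (t, x) (1, 0) := by
  have h := hf.hasFDerivAt.comp_hasDerivAt t ((hasDerivAt_id t).prodMk (hasDerivAt_const t x))
  exact h.deriv

lemma partialX_eq_fderiv (hf : DifferentiableAt ℝ (uncurry f) (t, x)) :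
    partialX f t x = fderiv ℝ (uncurry f) (t, x) (0, 1) := by
  have h := hf.hasFDerivAt.comp_hasDerivAt x ((hasDerivAt_const x t).prodMk (hasDerivAt_id x))
  exact h.deriv

end PartialDerivatives

section Regularity

variable {f : ℝ → ℝ → ℝ}

lemma uncurry_partialT (hf : Differentiable ℝ (uncurry f)) :
    uncurry (partialT f) = fun z => fderiv ℝ (uncurry f) z (1, 0) :=
  funext fun z => partialT_eq_fderiv (hf z)

lemma uncurry_partialX (hf : Differentiable ℝ (uncurry f)) :
    uncurry (partialX f) = fun z => fderiv ℝ (uncurry f) z (0, 1) :=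
  funext fun z => partialX_eq_fderiv (hf z)

lemma contDiff_uncurry_partialT {n : WithTop ℕ∞} (hf : ContDiff ℝ (n + 1) (uncurry f)) :
    ContDiff ℝ n (uncurry (partialT f)) := by
  rw [uncurry_partialT (hf.differentiable (by simp))]
  exact (hf.fderiv_right le_rfl).clm_apply contDiff_const

lemma contDiff_uncurry_partialX {n : WithTop ℕ∞} (hf : ContDiff ℝ (n + 1) (uncurry f)) :
    ContDiff ℝ n (uncurry (partialX f)) := by
  rw [uncurry_partialX (hf.differentiable (by simp))]
  exact (hf.fderiv_right le_rfl).clm_apply contDiff_const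

lemma partialT_partialX_comm (hf : ContDiff ℝ 2 (uncurry f)) (t x : ℝ) :
    partialT (partialX f) t x = partialX (partialT f) t x := by
  have hf' : Differentiable ℝ (uncurry f) := hf.differentiable (by simp)
  have hD : DifferentiableAt ℝ (fderiv ℝ (uncurry f)) (t, x) :=
    (hf.fderiv_right (m := 1) le_rfl).differentiable (by simp) _
  rw [partialT_eq_fderiv ((contDiff_uncurry_partialX (n := 1) hf).differentiable (by simp) _),
    partialX_eq_fderiv ((contDiff_uncurry_partialT (n := 1) hf).differentiable (by simp) _),
    uncurry_partialT hf', uncurry_partialX hf', fderiv_clm_apply hD (differentiableAt_const _),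
    fderiv_clm_apply hD (differentiableAt_const _)]
  simpa using ((hf.contDiffAt (x := (t, x))).isSymmSndFDerivAt (by simp)) (1, 0) (0, 1)

end Regularity

lemma HasDerivAt.sub_exp_neg_half_mul {u v φ : ℝ → ℝ} {u' v' φ' s : ℝ} (hu : HasDerivAt u u' s)
    (hv : HasDerivAt v v' s) (hφ : HasDerivAt φ φ' s) :
    HasDerivAt (fun s => u s - Real.exp (-φ s / 2) * v s)
      (u' - Real.exp (-φ s / 2) * (v' - φ' * v s / 2)) s :=
  (hu.fun_sub ((hφ.fun_neg.div_const 2).exp.fun_mul hv)).congr_deriv (by ring)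

section SubExpMul

variable {u v φ : ℝ → ℝ → ℝ} {t x : ℝ}

lemma partialT_sub_exp_neg_half_mul (hu : DifferentiableAt ℝ (uncurry u) (t, x))
    (hv : DifferentiableAt ℝ (uncurry v) (t, x)) (hφ : DifferentiableAt ℝ (uncurry φ) (t, x)) :
    partialT (fun t x => u t x - Real.exp (-φ t x / 2) * v t x) t x
      = partialT u t x - Real.exp (-φ t x / 2) * (partialT v t x - partialT φ t x * v t x / 2) :=
  (HasDerivAt.sub_exp_neg_half_mul (hasDerivAt_partialT hu) (hasDerivAt_partialT hv)
    (hasDerivAt_partialT hφ)).deriv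

lemma partialX_sub_exp_neg_half_mul (hu : DifferentiableAt ℝ (uncurry u) (t, x))
    (hv : DifferentiableAt ℝ (uncurry v) (t, x)) (hφ : DifferentiableAt ℝ (uncurry φ) (t, x)) :
    partialX (fun t x => u t x - Real.exp (-φ t x / 2) * v t x) t x
      = partialX u t x - Real.exp (-φ t x / 2) * (partialX v t x - partialX φ t x * v t x / 2) :=
  (HasDerivAt.sub_exp_neg_half_mul (hasDerivAt_partialX hu) (hasDerivAt_partialX hv)
    (hasDerivAt_partialX hφ)).deriv

end SubExpMul

/-- If `φ` is a C² solution of `φ_tt - e^{-φ} φ_xx = -φ_t²`, and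
`p = φ_t + e^{-φ/2} φ_x`, `q = φ_t - e^{-φ/2} φ_x`, `λ = e^{-φ/2}`,
then `q_t + λ q_x = -(1/4)(q² + 3 p q)`. -/
theorem stmt2 (φ : ℝ → ℝ → ℝ) (hφ : ContDiff ℝ 2 (Function.uncurry φ))
    (heq : ∀ t x, partialT (partialT φ) t x
        - Real.exp (-(φ t x)) * partialX (partialX φ) t x
        = -(partialT φ t x) ^ 2)
    (p q lam : ℝ → ℝ → ℝ)
    (hp : ∀ t x, p t x = partialT φ t x + Real.exp (-(φ t x) / 2) * partialX φ t x)
    (hq : ∀ t x, q t x = partialT φ t x - Real.exp (-(φ t x) / 2) * partialX φ t x)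
    (hlam : ∀ t x, lam t x = Real.exp (-(φ t x) / 2)) :
    ∀ t x, partialT q t x + lam t x * partialX q t x
      = -(1 / 4) * ((q t x) ^ 2 + 3 * p t x * q t x) := by
  intro t x
  obtain rfl : q = fun t x => partialT φ t x - Real.exp (-(φ t x) / 2) * partialX φ t x :=
    funext₂ hq
  have hφ₁ : Differentiable ℝ (uncurry φ) := hφ.differentiable (by simp)
  have hT : Differentiable ℝ (uncurry (partialT φ)) :=
    (contDiff_uncurry_partialT (n := 1) hφ).differentiable (by simp)
  have hX : Differentiable ℝ (uncurry (partialX φ)) :=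
    (contDiff_uncurry_partialX (n := 1) hφ).differentiable (by simp)
  have hexp : Real.exp (-φ t x) = Real.exp (-φ t x / 2) ^ 2 := by
    rw [← Real.exp_nat_mul]; ring_nf
  rw [partialT_sub_exp_neg_half_mul (hT _) (hX _) (hφ₁ _),
    partialX_sub_exp_neg_half_mul (hT _) (hX _) (hφ₁ _), hp, hlam, partialT_partialX_comm hφ]
  linear_combination heq t x + partialX (partialX φ) t x * hexp
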